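/- Let R > 0, θ ∈ (0, 2π), b ∈ ℂ with |b| = 1, and ζ ∈ ℂ \ {0} with ζ/b ∉ ℝ. Then lim_{s → 0⁺} ∫₀^∞ (1/(t(tb + ζ)))·( e^{−πRs/t}(1 − e^{−πRst}) / (1 − e^{iθ} e^{−πRs(t + 1/t)}) ) dt = 0. -/

import Mathlib

/-!
Write the integrand as the kernel `1 / (t (t b + ζ))` times a damping factor. For `0 < s ≤ 1`
the damping factor is bounded by `min 1 (π R t) / c`, where `c > 0` bounds `|1 - e^{iθ} x|`
from below on `[0, 1]` (this is where `θ ∉ 2πℤ` enters), and it tends to `0` as `s → 0`.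
Since `ζ / b ∉ ℝ`, `|t b + ζ|` is bounded below on all of `ℝ` and grows like `|b| t`, so the
kernel times `min 1 (π R t)` is bounded near `0` and `O(t⁻²)` at infinity, hence integrable.
Dominated convergence finishes the proof.
-/

open Complex Filter MeasureTheory Set Topology

theorem IsCompact.exists_pos_forall_le_norm {X E : Type*} [TopologicalSpace X]
    [NormedAddCommGroup E] {K : Set X} (hK : IsCompact K) {f : X → E} (hf : ContinuousOn f K)
    (hf0 : ∀ x ∈ K, f x ≠ 0) : ∃ c > 0, ∀ x ∈ K, c ≤ ‖f x‖ := by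
  rcases K.eq_empty_or_nonempty with rfl | hne
  · exact ⟨1, one_pos, by simp⟩
  obtain ⟨x₀, hx₀, hmin⟩ := hK.exists_isMinOn hne hf.norm
  exact ⟨‖f x₀‖, norm_pos_iff.2 (hf0 x₀ hx₀), fun x hx => hmin hx⟩

theorem exp_ofReal_mul_I_ne_one {θ : ℝ} (hθ : θ ∈ Ioo 0 (2 * Real.pi)) :
    Complex.exp (θ * I) ≠ 1 := by
  intro h
  have hcos : Real.cos θ = 1 := by rw [← exp_ofReal_mul_I_re, h, one_re]
  rw [Real.cos_eq_one_iff_of_lt_of_lt (by linarith [hθ.1, Real.pi_pos]) hθ.2] at hcos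
  exact hθ.1.ne' hcos

theorem exists_pos_forall_le_norm_one_sub_mul_ofReal {w : ℂ} (hw : ‖w‖ = 1) (hw1 : w ≠ 1) :
    ∃ c > 0, ∀ x ∈ Icc (0:ℝ) 1, c ≤ ‖1 - w * x‖ := by
  refine isCompact_Icc.exists_pos_forall_le_norm (by fun_prop) fun x hx h => hw1 ?_
  have hwx : w * x = 1 := (sub_eq_zero.1 h).symm
  have hx1 : x = 1 := by
    simpa [hw, abs_of_nonneg hx.1] using congrArg norm hwx
  simpa [hx1] using hwx

theorem le_norm_ofReal_mul_add {b ζ : ℂ} (hb : b ≠ 0) (t : ℝ) :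
    ‖b‖ * |(ζ / b).im| ≤ ‖t * b + ζ‖ := by
  have : (t : ℂ) * b + ζ = b * (t + ζ / b) := by field_simp
  rw [this, norm_mul]
  gcongr
  simpa using abs_im_le_norm ((t : ℂ) + ζ / b)

theorem norm_mul_div_two_le_norm_ofReal_mul_add {b ζ : ℂ} {t : ℝ}
    (ht : 2 * ‖ζ‖ ≤ t * ‖b‖) (ht0 : 0 ≤ t) : t * ‖b‖ / 2 ≤ ‖t * b + ζ‖ := by
  have := norm_sub_norm_le ((t : ℂ) * b) (-ζ)
  rw [sub_neg_eq_add, norm_neg, norm_mul, norm_real, Real.norm_of_nonneg ht0] at this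
  linarith

theorem integrableOn_Ioi_zero_of_le_of_le_div_sq {f : ℝ → ℝ} {M K T : ℝ} (hT : 0 < T)
    (hf : AEStronglyMeasurable f (volume.restrict (Ioi 0)))
    (hnear : ∀ t ∈ Ioc 0 T, ‖f t‖ ≤ M) (hfar : ∀ t ∈ Ioi T, ‖f t‖ ≤ K / t ^ 2) :
    IntegrableOn f (Ioi 0) := by
  rw [← Ioc_union_Ioi_eq_Ioi hT.le]
  refine IntegrableOn.union ?_ ?_
  · refine Integrable.mono' (integrable_const M) (hf.mono_set Ioc_subset_Ioi_self) ?_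
    exact (ae_restrict_iff' measurableSet_Ioc).2 (Eventually.of_forall hnear)
  · have hK : IntegrableOn (fun t : ℝ => K * t ^ (-2:ℝ)) (Ioi T) :=
      (integrableOn_Ioi_rpow_of_lt (by norm_num) hT).const_mul K
    refine Integrable.mono' hK (hf.mono_set (Ioi_subset_Ioi hT.le)) ?_
    refine (ae_restrict_iff' measurableSet_Ioi).2 (Eventually.of_forall fun t ht => ?_)
    have ht0 : 0 < t := hT.trans ht
    rw [Real.rpow_neg ht0.le, Real.rpow_two, ← div_eq_mul_inv]
    exact hfar t ht

theorem integrableOn_Ioi_norm_one_div_mul_min {b ζ : ℂ} (hζb : (ζ / b).im ≠ 0)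
    {a : ℝ} (ha : 0 ≤ a) :
    IntegrableOn (fun t : ℝ => ‖1 / ((t : ℂ) * (t * b + ζ))‖ * min 1 (a * t)) (Ioi 0) := by
  have hb : b ≠ 0 := by rintro rfl; simp at hζb
  have hd : 0 < ‖b‖ * |(ζ / b).im| := by positivity
  refine integrableOn_Ioi_zero_of_le_of_le_div_sq (M := a / (‖b‖ * |(ζ / b).im|))
    (K := 2 / ‖b‖) (T := 2 * ‖ζ‖ / ‖b‖ + 1) (by positivity) (by fun_prop) ?_ ?_
  · rintro t ⟨ht, -⟩
    have := le_norm_ofReal_mul_add hb t (ζ := ζ)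
    rw [Real.norm_of_nonneg (by positivity), norm_div, norm_one, norm_mul, norm_real,
      Real.norm_of_nonneg ht.le]
    calc 1 / (t * ‖t * b + ζ‖) * min 1 (a * t)
      _ ≤ 1 / (t * (‖b‖ * |(ζ / b).im|)) * (a * t) := by
        gcongr
        exact min_le_right _ _
      _ = a / (‖b‖ * |(ζ / b).im|) := by field_simp
  · intro t ht
    have ht0 : 0 < t := lt_trans (by positivity) ht
    have hfar : 2 * ‖ζ‖ ≤ t * ‖b‖ := by
      rw [mem_Ioi, div_add_one (norm_ne_zero_iff.2 hb), div_lt_iff₀ (by positivity)] at ht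
      linarith [norm_nonneg b]
    have := norm_mul_div_two_le_norm_ofReal_mul_add hfar ht0.le
    rw [Real.norm_of_nonneg (by positivity), norm_div, norm_one, norm_mul, norm_real,
      Real.norm_of_nonneg ht0.le]
    calc 1 / (t * ‖t * b + ζ‖) * min 1 (a * t)
      _ ≤ 1 / (t * (t * ‖b‖ / 2)) * 1 := by
        gcongr
        exact min_le_left _ _
      _ = 2 / ‖b‖ / t ^ 2 := by field_simp

noncomputable def dampingFactor (R θ s t : ℝ) : ℂ :=
  (Real.exp (-Real.pi * R * s / t) : ℂ) * (1 - (Real.exp (-Real.pi * R * s * t) : ℂ)) /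
    (1 - Complex.exp ((θ : ℂ) * I) * (Real.exp (-Real.pi * R * s * (t + 1 / t)) : ℂ))

theorem one_sub_exp_neg_mem_Icc {x : ℝ} (hx : 0 ≤ x) :
    1 - Real.exp (-x) ∈ Icc 0 (min 1 x) := by
  refine ⟨by simpa using Real.exp_le_one_iff.2 (neg_nonpos.2 hx), le_min ?_ ?_⟩
  · linarith [Real.exp_pos (-x)]
  · linarith [Real.add_one_le_exp (-x)]

theorem norm_dampingFactor_le {R θ s t c : ℝ} (hR : 0 ≤ R) (hs : s ∈ Icc (0:ℝ) 1)
    (ht : 0 < t) (hden : ∀ x ∈ Icc (0:ℝ) 1, c ≤ ‖1 - Complex.exp (θ * I) * x‖)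
    (hc : 0 < c) :
    ‖dampingFactor R θ s t‖ ≤ min 1 (Real.pi * R * t) / c := by
  have hπR : 0 ≤ Real.pi * R := mul_nonneg Real.pi_pos.le hR
  have hneg : -Real.pi * R * s ≤ 0 := by nlinarith [hs.1]
  have hA : Real.exp (-Real.pi * R * s / t) ≤ 1 :=
    Real.exp_le_one_iff.2 (div_nonpos_of_nonpos_of_nonneg hneg ht.le)
  have hX := hden (Real.exp (-Real.pi * R * s * (t + 1 / t)))
    ⟨(Real.exp_pos _).le,
      Real.exp_le_one_iff.2 (mul_nonpos_of_nonpos_of_nonneg hneg (by positivity))⟩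
  obtain ⟨hB0, hB⟩ := one_sub_exp_neg_mem_Icc (mul_nonneg (mul_nonneg hπR hs.1) ht.le)
  have hst : Real.pi * R * s * t ≤ Real.pi * R * t := by
    nlinarith [mul_nonneg (mul_nonneg hπR ht.le) (sub_nonneg.2 hs.2)]
  have hBt : 1 - Real.exp (-(Real.pi * R * s * t)) ≤ min 1 (Real.pi * R * t) :=
    hB.trans (min_le_min_left _ hst)
  unfold dampingFactor
  rw [show -Real.pi * R * s * t = -(Real.pi * R * s * t) by ring]
  rw [norm_div, norm_mul, ← ofReal_one, ← ofReal_sub, norm_real, norm_real,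
    Real.norm_of_nonneg (Real.exp_pos _).le, Real.norm_of_nonneg (by simpa using hB0)]
  calc _ ≤ 1 * min 1 (Real.pi * R * t) / c := by gcongr; exact_mod_cast hX
    _ = _ := by rw [one_mul]

theorem tendsto_dampingFactor {R θ : ℝ} (hθ : Complex.exp (θ * I) ≠ 1) (t : ℝ) :
    Tendsto (fun s => dampingFactor R θ s t) (𝓝 0) (𝓝 0) := by
  have hnum : Continuous fun s : ℝ => (Real.exp (-Real.pi * R * s / t) : ℂ) *
      (1 - (Real.exp (-Real.pi * R * s * t) : ℂ)) := by fun_prop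
  have hden : Continuous fun s : ℝ =>
      1 - Complex.exp ((θ : ℂ) * I) * (Real.exp (-Real.pi * R * s * (t + 1 / t)) : ℂ) := by
    fun_prop
  have hcont : ContinuousAt (fun s => dampingFactor R θ s t) 0 :=
    hnum.continuousAt.div hden.continuousAt (by simpa [sub_eq_zero] using hθ.symm)
  simpa [dampingFactor] using hcont.tendsto

theorem ov_dominated_convergence_reduction_general (R θ : ℝ) (b ζ : ℂ) (hR : 0 < R)
    (hθ : θ ∈ Set.Ioo 0 (2 * Real.pi))
    (hζb : ¬ ∃ r : ℝ, (r : ℂ) = ζ / b) :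
    Tendsto (fun s : ℝ =>
        ∫ t in Set.Ioi (0:ℝ), (1 / ((t : ℂ) * ((t : ℂ) * b + ζ))) *
          ((Real.exp (-Real.pi * R * s / t) : ℂ) * (1 - (Real.exp (-Real.pi * R * s * t) : ℂ)) /
            (1 - Complex.exp ((θ : ℂ) * I) *
              (Real.exp (-Real.pi * R * s * (t + 1 / t)) : ℂ))))
      (nhdsWithin 0 (Set.Ioi 0)) (nhds 0) := by
  show Tendsto (fun s => ∫ t in Ioi (0:ℝ), 1 / ((t : ℂ) * (t * b + ζ)) * dampingFactor R θ s t)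
    _ _
  have hw := exp_ofReal_mul_I_ne_one hθ
  obtain ⟨c, hc, hden⟩ :=
    exists_pos_forall_le_norm_one_sub_mul_ofReal (norm_exp_ofReal_mul_I θ) hw
  have him : (ζ / b).im ≠ 0 := fun h =>
    hζb ⟨(ζ / b).re, Complex.ext (by simp) (by simp [h])⟩
  have hdom := (integrableOn_Ioi_norm_one_div_mul_min him
    (mul_nonneg Real.pi_pos.le hR.le)).div_const c
  have hbound : ∀ᶠ s in 𝓝[>] 0, ∀ᵐ t : ℝ ∂volume.restrict (Ioi 0),
      ‖1 / ((t : ℂ) * (t * b + ζ)) * dampingFactor R θ s t‖ ≤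
        ‖1 / ((t : ℂ) * (t * b + ζ))‖ * min 1 (Real.pi * R * t) / c := by
    filter_upwards [Ioo_mem_nhdsGT one_pos] with s hs
    refine (ae_restrict_iff' measurableSet_Ioi).2 (Eventually.of_forall fun t ht => ?_)
    rw [norm_mul, mul_div_assoc]
    gcongr
    exact norm_dampingFactor_le hR.le (Ioo_subset_Icc_self hs) ht hden hc
  have hmeas : ∀ s, AEStronglyMeasurable
      (fun t : ℝ => 1 / ((t : ℂ) * (t * b + ζ)) * dampingFactor R θ s t)
      (volume.restrict (Ioi 0)) :=
    fun s => (by unfold dampingFactor; fun_prop : Measurable _).aestronglyMeasurable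
  have hlim : ∀ᵐ t : ℝ ∂volume.restrict (Ioi 0), Tendsto
      (fun s => 1 / ((t : ℂ) * (t * b + ζ)) * dampingFactor R θ s t) (𝓝[>] 0) (𝓝 0) :=
    Eventually.of_forall fun t => by
      simpa using ((tendsto_dampingFactor hw t).const_mul _).mono_left nhdsWithin_le_nhds
  simpa only [integral_zero] using tendsto_integral_filter_of_dominated_convergence _
    (Eventually.of_forall hmeas) hbound hdom hlim

/-- For `R > 0`, `θ ∈ (0, 2π)`, `|b| = 1`, and `ζ ≠ 0` with `ζ/b ∉ ℝ`,
`lim_{s → 0⁺} ∫₀^∞ (1/(t(tb+ζ)))·(e^{-πRs/t}(1 - e^{-πRst})/(1 - e^{iθ}e^{-πRs(t+1/t)})) dt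
  = 0`. -/
theorem ov_dominated_convergence_reduction (R θ : ℝ) (b ζ : ℂ) (hR : 0 < R)
    (hθ : θ ∈ Set.Ioo 0 (2 * Real.pi)) (hb : ‖b‖ = 1) (hζ : ζ ≠ 0)
    (hζb : ¬ ∃ r : ℝ, (r : ℂ) = ζ / b) :
    Tendsto (fun s : ℝ =>
        ∫ t in Set.Ioi (0:ℝ), (1 / ((t : ℂ) * ((t : ℂ) * b + ζ))) *
          ((Real.exp (-Real.pi * R * s / t) : ℂ) * (1 - (Real.exp (-Real.pi * R * s * t) : ℂ)) /
            (1 - Complex.exp ((θ : ℂ) * I) *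
              (Real.exp (-Real.pi * R * s * (t + 1 / t)) : ℂ))))
      (nhdsWithin 0 (Set.Ioi 0)) (nhds 0) :=
  ov_dominated_convergence_reduction_general R θ b ζ hR hθ hζb
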